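/- arXiv:1511.00128 — 6 statements merged into one kernel-verified Lean document; each statement's English description precedes it below -/
import Mathlib

section
/- Convexity of extremal-depth level sets (Proposition 1): Assume that for every h ∈ C(I,ℝ), the set {x ∈ C(I,ℝ) : d_x = d_h and x ≠ h} has P-outer measure zero. Then for every α ∈ (0,1): if f₁, f₂, f ∈ C(I,ℝ) satisfy ED(f₁,P) ≥ α, ED(f₂,P) ≥ α, and f₁(t) ≤ f(t) ≤ f₂(t) for all t ∈ I, then ED(f,P) ≥ α. In particular, the extremal-depth level set {h ∈ C(I,ℝ) : ED(h,P) ≥ α} is a convex subset of C(I,ℝ). -/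
open MeasureTheory Set Filter
open scoped NNReal ENNReal symmDiff

noncomputable section

/-- The space `C(I, ℝ)` of continuous real-valued functions on `I = [0,1]`,
equipped with the sup metric. -/
abbrev FSp := C(unitInterval, ℝ)

/-- Borel σ-algebra on `C(I, ℝ)`. -/
instance : MeasurableSpace FSp := borel FSp
instance : BorelSpace FSp := ⟨rfl⟩

/-- Pointwise depth `D_g(t) = 1 - |P{x : x(t) > g(t)} - P{x : x(t) < g(t)}|`. -/
def pdepth (P : Measure FSp) (g : unitInterval → ℝ) (t : unitInterval) : ℝ :=
  1 - |(P {x : FSp | g t < x t}).toReal - (P {x : FSp | x t < g t}).toReal|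

/-- Depth CDF (d-CDF) `Φ_g(r) = Leb{t ∈ I : D_g(t) ≤ r}`. -/
def dcdf (P : Measure FSp) (g : unitInterval → ℝ) (r : ℝ) : ℝ :=
  (volume {t : unitInterval | pdepth P g t ≤ r}).toReal

/-- The set `R(g,h) = {r ∈ [0,1] : Φ_g(r) ≠ Φ_h(r)}`. -/
def Rset (P : Measure FSp) (g h : unitInterval → ℝ) : Set ℝ :=
  {r ∈ Icc (0:ℝ) 1 | dcdf P g r ≠ dcdf P h r}

/-- `g ≺ h`: `g` is more extreme than `h`, i.e. `R(g,h)` is nonempty and, with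
`r* = inf R(g,h)`, there is `δ > 0` with `Φ_g(r) > Φ_h(r)` for all
`r ∈ (r*, r*+δ) ∩ [0,1]`.  `g ⪰ h` is `¬ prec P g h`. -/
def prec (P : Measure FSp) (g h : unitInterval → ℝ) : Prop :=
  (Rset P g h).Nonempty ∧
  ∃ δ > 0, ∀ r ∈ Ioo (sInf (Rset P g h)) (sInf (Rset P g h) + δ) ∩ Icc (0:ℝ) 1,
    dcdf P h r < dcdf P g r

/-- Extremal depth `ED(g,P) = P*{x ∈ C(I,ℝ) : g ⪰ x}` (a measure applied to an
arbitrary set is the induced outer measure). -/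
def ed (P : Measure FSp) (g : unitInterval → ℝ) : ℝ :=
  (P {x : FSp | ¬ prec P g ⇑x}).toReal

/-- Minimal depth level `d_f = inf{r ∈ [0,1] : Φ_f(r) > 0}`. -/
def dmin (P : Measure FSp) (f : unitInterval → ℝ) : ℝ :=
  sInf {r ∈ Icc (0:ℝ) 1 | 0 < dcdf P f r}

/-- Marginal CDF `F_t(y) = P{x : x(t) ≤ y}`. -/
def margF (P : Measure FSp) (t : unitInterval) (y : ℝ) : ℝ :=
  (P {x : FSp | x t ≤ y}).toReal

/-- Pointwise quantile function `q_a(t) = inf{y : F_t(y) ≥ a}`. -/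
def quant (P : Measure FSp) (a : ℝ) (t : unitInterval) : ℝ :=
  sInf {y : ℝ | a ≤ margF P t y}

/-- Lower envelope `f_L(t) = inf{f(t) : f ∈ C(I,ℝ), ED(f,P) > α}`. -/
def envL (P : Measure FSp) (α : ℝ) (t : unitInterval) : ℝ :=
  sInf ((fun f : FSp => f t) '' {f : FSp | α < ed P ⇑f})

/-- Upper envelope `f_U(t) = sup{f(t) : f ∈ C(I,ℝ), ED(f,P) > α}`. -/
def envU (P : Measure FSp) (α : ℝ) (t : unitInterval) : ℝ :=
  sSup ((fun f : FSp => f t) '' {f : FSp | α < ed P ⇑f})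

/-- The `(1-α)` extremal-depth central region `C_{1-α}`. -/
def centralRegion (P : Measure FSp) (α : ℝ) : Set FSp :=
  {x : FSp | ∀ t, envL P α t ≤ x t ∧ x t ≤ envU P α t}

/-- Boundary `∂C_{1-α}` of the central region. -/
def centralBoundary (P : Measure FSp) (α : ℝ) : Set FSp :=
  {x ∈ centralRegion P α | ∃ t, x t = envL P α t ∨ x t = envU P α t}

section AuxLemmas

variable (P : Measure FSp) [IsProbabilityMeasure P]

lemma dcdf_nonneg (g : unitInterval → ℝ) (r : ℝ) : 0 ≤ dcdf P g r :=
  ENNReal.toReal_nonneg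

lemma dcdf_mono (g : unitInterval → ℝ) {r r' : ℝ} (h : r ≤ r') :
    dcdf P g r ≤ dcdf P g r' := by
  apply ENNReal.toReal_mono (measure_ne_top _ _)
  exact measure_mono fun t ht => le_trans ht h

lemma dcdf_one (g : unitInterval → ℝ) : dcdf P g 1 = 1 := by
  have hset : {t : unitInterval | pdepth P g t ≤ 1} = Set.univ := by
    ext t
    simp only [Set.mem_setOf_eq, Set.mem_univ, iff_true, pdepth]
    have := abs_nonneg ((P {x : FSp | g t < x t}).toReal -
      (P {x : FSp | x t < g t}).toReal)
    linarith
  rw [dcdf, hset]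
  simp

lemma one_mem_dminSet (g : unitInterval → ℝ) :
    (1 : ℝ) ∈ {r ∈ Icc (0:ℝ) 1 | 0 < dcdf P g r} := by
  refine ⟨⟨zero_le_one, le_refl 1⟩, ?_⟩
  rw [dcdf_one]
  norm_num

lemma dminSet_bddBelow (g : unitInterval → ℝ) :
    BddBelow {r ∈ Icc (0:ℝ) 1 | 0 < dcdf P g r} :=
  ⟨0, fun r hr => hr.1.1⟩

lemma dmin_nonneg (g : unitInterval → ℝ) : 0 ≤ dmin P g :=
  le_csInf ⟨1, one_mem_dminSet P g⟩ fun r hr => hr.1.1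

lemma dmin_le_one (g : unitInterval → ℝ) : dmin P g ≤ 1 :=
  csInf_le (dminSet_bddBelow P g) (one_mem_dminSet P g)

lemma dcdf_pos_of_dmin_lt (g : unitInterval → ℝ) {r : ℝ} (h : dmin P g < r) :
    0 < dcdf P g r := by
  obtain ⟨s, hs, hsr⟩ := exists_lt_of_csInf_lt ⟨1, one_mem_dminSet P g⟩ h
  exact lt_of_lt_of_le hs.2 (dcdf_mono P g hsr.le)

lemma dcdf_eq_zero_of_lt_dmin (g : unitInterval → ℝ) {r : ℝ}
    (hr : r ∈ Icc (0:ℝ) 1) (h : r < dmin P g) : dcdf P g r = 0 := by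
  by_contra hne
  have hpos : 0 < dcdf P g r := lt_of_le_of_ne (dcdf_nonneg P g r) (Ne.symm hne)
  exact absurd (csInf_le (dminSet_bddBelow P g) ⟨hr, hpos⟩) (not_le.2 h)

lemma Ioo_subset_rset {g x : unitInterval → ℝ} (hgx : dmin P g < dmin P x) :
    Ioo (dmin P g) (dmin P x) ⊆ Rset P g x := by
  intro r hr
  have hicc : r ∈ Icc (0:ℝ) 1 :=
    ⟨le_of_lt (lt_of_le_of_lt (dmin_nonneg P g) hr.1),
     le_of_lt (lt_of_lt_of_le hr.2 (dmin_le_one P x))⟩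
  refine ⟨hicc, ?_⟩
  rw [dcdf_eq_zero_of_lt_dmin P x hicc hr.2]
  exact ne_of_gt (dcdf_pos_of_dmin_lt P g hr.1)

lemma rset_lb {g x : unitInterval → ℝ} :
    ∀ r ∈ Rset P g x, min (dmin P g) (dmin P x) ≤ r := by
  intro r hr
  by_contra h
  push_neg at h
  have h1 : dcdf P g r = 0 :=
    dcdf_eq_zero_of_lt_dmin P g hr.1 (lt_of_lt_of_le h (min_le_left _ _))
  have h2 : dcdf P x r = 0 :=
    dcdf_eq_zero_of_lt_dmin P x hr.1 (lt_of_lt_of_le h (min_le_right _ _))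
  exact hr.2 (h1.trans h2.symm)

lemma rset_nonempty {g x : unitInterval → ℝ} (hgx : dmin P g < dmin P x) :
    (Rset P g x).Nonempty :=
  ⟨(dmin P g + dmin P x) / 2,
    Ioo_subset_rset P hgx ⟨by linarith, by linarith⟩⟩

lemma sInf_rset {g x : unitInterval → ℝ} (hgx : dmin P g < dmin P x) :
    sInf (Rset P g x) = dmin P g := by
  have hbdd : BddBelow (Rset P g x) := ⟨min (dmin P g) (dmin P x), rset_lb P⟩
  refine le_antisymm ?_ ?_
  · by_contra h
    push_neg at h
    set c := min (sInf (Rset P g x)) (dmin P x) with hc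
    have hac : dmin P g < c := lt_min h hgx
    have hmem : (dmin P g + c) / 2 ∈ Rset P g x :=
      Ioo_subset_rset P hgx
        ⟨by linarith, by
          have := min_le_right (sInf (Rset P g x)) (dmin P x)
          rw [← hc] at this
          linarith⟩
    have hle := csInf_le hbdd hmem
    have := min_le_left (sInf (Rset P g x)) (dmin P x)
    rw [← hc] at this
    linarith
  · refine le_csInf (rset_nonempty P hgx) fun r hr => ?_
    have := rset_lb P r hr
    rw [min_eq_left hgx.le] at this
    exact this

lemma rset_comm (g x : unitInterval → ℝ) : Rset P g x = Rset P x g := by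
  ext r
  exact and_congr_right fun _ => ne_comm

lemma prec_of_dmin_lt {g x : unitInterval → ℝ} (hgx : dmin P g < dmin P x) :
    prec P g x := by
  refine ⟨rset_nonempty P hgx, dmin P x - dmin P g, by linarith, ?_⟩
  rintro r ⟨⟨h1, h2⟩, hicc⟩
  rw [sInf_rset P hgx] at h1 h2
  have hrx : r < dmin P x := by linarith
  rw [dcdf_eq_zero_of_lt_dmin P x hicc hrx]
  exact dcdf_pos_of_dmin_lt P g h1

lemma not_prec_of_dmin_lt {g x : unitInterval → ℝ} (hxg : dmin P x < dmin P g) :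
    ¬ prec P g x := by
  rintro ⟨hne, δ, hδ, hlt⟩
  have hs : sInf (Rset P g x) = dmin P x := by
    rw [rset_comm]
    exact sInf_rset P hxg
  set b := dmin P x with hb
  set c := min (b + δ) (dmin P g) with hc
  have hbc : b < c := lt_min (by linarith) hxg
  set r := (b + c) / 2 with hrdef
  have hr1 : b < r := by simp only [hrdef]; linarith
  have hr2 : r < c := by simp only [hrdef]; linarith
  have hrg : r < dmin P g := lt_of_lt_of_le hr2 (min_le_right _ _)
  have hricc : r ∈ Icc (0:ℝ) 1 :=
    ⟨le_of_lt (lt_of_le_of_lt (dmin_nonneg P x) hr1),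
     le_of_lt (lt_of_lt_of_le hrg (dmin_le_one P g))⟩
  have hmem : r ∈ Ioo (sInf (Rset P g x)) (sInf (Rset P g x) + δ) ∩ Icc (0:ℝ) 1 := by
    refine ⟨⟨?_, ?_⟩, hricc⟩
    · rw [hs]; exact hr1
    · rw [hs]
      have := min_le_left (b + δ) (dmin P g)
      rw [← hc] at this
      linarith
  have hlt' := hlt r hmem
  rw [dcdf_eq_zero_of_lt_dmin P g hricc hrg] at hlt'
  exact absurd hlt' (not_lt.2 (dcdf_nonneg P x r))

lemma not_prec_self (g : unitInterval → ℝ) : ¬ prec P g g := by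
  rintro ⟨⟨r, hr⟩, -⟩
  exact hr.2 rfl

lemma pdepth_min_le {f₁ f₂ f : unitInterval → ℝ}
    (hb : ∀ t, min (f₁ t) (f₂ t) ≤ f t ∧ f t ≤ max (f₁ t) (f₂ t))
    (t : unitInterval) :
    min (pdepth P f₁ t) (pdepth P f₂ t) ≤ pdepth P f t := by
  set s : ℝ → ℝ := fun y =>
    (P {x : FSp | y < x t}).toReal - (P {x : FSp | x t < y}).toReal with hsdef
  have smono : ∀ {y y' : ℝ}, y ≤ y' → s y' ≤ s y := by
    intro y y' hyy
    have h1 : (P {x : FSp | y' < x t}).toReal ≤ (P {x : FSp | y < x t}).toReal :=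
      ENNReal.toReal_mono (measure_ne_top P _)
        (measure_mono fun x hx => lt_of_le_of_lt hyy hx)
    have h2 : (P {x : FSp | x t < y}).toReal ≤ (P {x : FSp | x t < y'}).toReal :=
      ENNReal.toReal_mono (measure_ne_top P _)
        (measure_mono fun x hx => lt_of_lt_of_le hx hyy)
    simp only [hsdef]
    linarith
  have hub : s (f t) ≤ max (s (f₁ t)) (s (f₂ t)) := by
    have h := smono (hb t).1
    rcases min_cases (f₁ t) (f₂ t) with ⟨he, -⟩ | ⟨he, -⟩ <;> rw [he] at h
    · exact h.trans (le_max_left _ _)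
    · exact h.trans (le_max_right _ _)
  have hlb : min (s (f₁ t)) (s (f₂ t)) ≤ s (f t) := by
    have h := smono (hb t).2
    rcases max_cases (f₁ t) (f₂ t) with ⟨he, -⟩ | ⟨he, -⟩ <;> rw [he] at h
    · exact le_trans (min_le_left _ _) h
    · exact le_trans (min_le_right _ _) h
  have habs : |s (f t)| ≤ max |s (f₁ t)| |s (f₂ t)| := by
    rw [abs_le]
    constructor
    · have h1 : -(max |s (f₁ t)| |s (f₂ t)|) ≤ s (f₁ t) :=
        neg_le.mp (by
          calc -(s (f₁ t)) ≤ |s (f₁ t)| := neg_le_abs _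
          _ ≤ _ := le_max_left _ _)
      have h2 : -(max |s (f₁ t)| |s (f₂ t)|) ≤ s (f₂ t) :=
        neg_le.mp (by
          calc -(s (f₂ t)) ≤ |s (f₂ t)| := neg_le_abs _
          _ ≤ _ := le_max_right _ _)
      exact le_trans (le_min h1 h2) hlb
    · exact hub.trans (max_le_max (le_abs_self _) (le_abs_self _))
  have hpd : ∀ g : unitInterval → ℝ, pdepth P g t = 1 - |s (g t)| := fun g => rfl
  rw [hpd f₁, hpd f₂, hpd f, min_sub_sub_left]
  linarith

lemma dmin_min_le {f₁ f₂ f : unitInterval → ℝ}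
    (hb : ∀ t, min (f₁ t) (f₂ t) ≤ f t ∧ f t ≤ max (f₁ t) (f₂ t)) :
    min (dmin P f₁) (dmin P f₂) ≤ dmin P f := by
  refine le_csInf ⟨1, one_mem_dminSet P f⟩ fun r hr => ?_
  have hsub : {t : unitInterval | pdepth P f t ≤ r} ⊆
      {t : unitInterval | pdepth P f₁ t ≤ r} ∪ {t : unitInterval | pdepth P f₂ t ≤ r} := by
    intro t ht
    rcases min_le_iff.1 (le_trans (pdepth_min_le P hb t) ht) with h | h
    · exact Or.inl h
    · exact Or.inr h
  have hle : dcdf P f r ≤ dcdf P f₁ r + dcdf P f₂ r := by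
    rw [dcdf, dcdf, dcdf, ← ENNReal.toReal_add (measure_ne_top _ _) (measure_ne_top _ _)]
    exact ENNReal.toReal_mono
      (ENNReal.add_ne_top.2 ⟨measure_ne_top _ _, measure_ne_top _ _⟩)
      (le_trans (measure_mono hsub) (measure_union_le _ _))
  have hpos : 0 < dcdf P f₁ r ∨ 0 < dcdf P f₂ r := by
    by_contra hc
    push_neg at hc
    have e1 : dcdf P f₁ r = 0 := le_antisymm hc.1 (dcdf_nonneg P f₁ r)
    have e2 : dcdf P f₂ r = 0 := le_antisymm hc.2 (dcdf_nonneg P f₂ r)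
    rw [e1, e2] at hle
    linarith [hr.2]
  rcases hpos with h | h
  · exact le_trans (min_le_left _ _) (csInf_le (dminSet_bddBelow P f₁) ⟨hr.1, h⟩)
  · exact le_trans (min_le_right _ _) (csInf_le (dminSet_bddBelow P f₂) ⟨hr.1, h⟩)

lemma ed_key (f₁ f₂ f : FSp)
    (hcf : P {x : FSp | dmin P ⇑x = dmin P ⇑f ∧ x ≠ f} = 0)
    {α : ℝ} (h1 : α ≤ ed P ⇑f₁) (h2 : α ≤ ed P ⇑f₂)
    (hb : ∀ t, min (f₁ t) (f₂ t) ≤ f t ∧ f t ≤ max (f₁ t) (f₂ t)) :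
    α ≤ ed P ⇑f := by
  have hk : min (dmin P ⇑f₁) (dmin P ⇑f₂) ≤ dmin P ⇑f := dmin_min_le P hb
  obtain ⟨g, hg, hgd⟩ : ∃ g : FSp, α ≤ ed P ⇑g ∧ dmin P ⇑g ≤ dmin P ⇑f := by
    rcases le_total (dmin P ⇑f₁) (dmin P ⇑f₂) with hm | hm
    · exact ⟨f₁, h1, by rwa [min_eq_left hm] at hk⟩
    · exact ⟨f₂, h2, by rwa [min_eq_right hm] at hk⟩
  refine le_trans hg ?_
  have hsub : {x : FSp | ¬ prec P ⇑g ⇑x} ⊆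
      {x : FSp | ¬ prec P ⇑f ⇑x} ∪ {x : FSp | dmin P ⇑x = dmin P ⇑f ∧ x ≠ f} := by
    intro x hx
    have hxle : dmin P ⇑x ≤ dmin P ⇑g := by
      by_contra hlt
      push_neg at hlt
      exact hx (prec_of_dmin_lt P hlt)
    rcases lt_or_eq_of_le (hxle.trans hgd) with hlt | heq
    · exact Or.inl (not_prec_of_dmin_lt P hlt)
    · by_cases hxf : x = f
      · subst hxf
        exact Or.inl (not_prec_self P ⇑x)
      · exact Or.inr ⟨heq, hxf⟩
  refine ENNReal.toReal_mono (measure_ne_top P _) ?_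
  calc P {x : FSp | ¬ prec P ⇑g ⇑x}
      ≤ P ({x : FSp | ¬ prec P ⇑f ⇑x} ∪ {x : FSp | dmin P ⇑x = dmin P ⇑f ∧ x ≠ f}) :=
        measure_mono hsub
    _ ≤ P {x : FSp | ¬ prec P ⇑f ⇑x} + P {x : FSp | dmin P ⇑x = dmin P ⇑f ∧ x ≠ f} :=
        measure_union_le _ _
    _ = P {x : FSp | ¬ prec P ⇑f ⇑x} := by rw [hcf, add_zero]

end AuxLemmas

/-- **Proposition 1 (convexity of extremal-depth level sets).** -/
theorem extremal_depth_level_sets_convex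
    (P : Measure FSp) [IsProbabilityMeasure P]
    (hcond : ∀ h : FSp, P {x : FSp | dmin P ⇑x = dmin P ⇑h ∧ x ≠ h} = 0) :
    ∀ α ∈ Ioo (0:ℝ) 1,
      (∀ f₁ f₂ f : FSp, α ≤ ed P ⇑f₁ → α ≤ ed P ⇑f₂ →
        (∀ t, f₁ t ≤ f t ∧ f t ≤ f₂ t) → α ≤ ed P ⇑f) ∧
      Convex ℝ {h : FSp | α ≤ ed P ⇑h} := by
  intro α hα
  refine ⟨fun f₁ f₂ f h1 h2 hb => ?_, ?_⟩
  · exact ed_key P f₁ f₂ f (hcond f) h1 h2 fun t =>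
      ⟨le_trans (min_le_left _ _) (hb t).1, le_trans (hb t).2 (le_max_right _ _)⟩
  · intro g₁ hg₁ g₂ hg₂ a b ha hbn hab
    refine ed_key P g₁ g₂ _ (hcond _) hg₁ hg₂ fun t => ?_
    have hcoe : (a • g₁ + b • g₂) t = a * g₁ t + b * g₂ t := by
      simp [ContinuousMap.add_apply, ContinuousMap.smul_apply, smul_eq_mul]
    rw [hcoe]
    set m := min (g₁ t) (g₂ t) with hm
    set M := max (g₁ t) (g₂ t) with hM
    constructor
    · have e : m = a * m + b * m := by rw [← add_mul, hab, one_mul]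
      rw [e]
      exact add_le_add (mul_le_mul_of_nonneg_left (min_le_left _ _) ha)
        (mul_le_mul_of_nonneg_left (min_le_right _ _) hbn)
    · have e : M = a * M + b * M := by rw [← add_mul, hab, one_mul]
      rw [e]
      exact add_le_add (mul_le_mul_of_nonneg_left (le_max_left _ _) ha)
        (mul_le_mul_of_nonneg_left (le_max_right _ _) hbn)
end
end

section
/- Extremal-depth central regions of Gaussian-type processes (Corollary 1): (a) For every α ∈ (0,1), there exists γ ∈ (0,1) such that P*(C_{1−α} Δ Q_{1−γ}) = 0, where C_{1−α} is the (1−α) extremal-depth central region of P, Q_{1−γ} := {f ∈ C(I,ℝ) : q_{γ/2}(t) ≤ f(t) ≤ q_{1−γ/2}(t) for all t ∈ I}, and Δ denotes symmetric difference. (b) If h(t,s) = s for all (t,s) (so that P = P_Y is the centered process itself), then for every α ∈ (0,1) there exists w > 0 such that P_Y*(C_{1−α} Δ {f ∈ C(I,ℝ) : |f(t)| ≤ w σ(t) for all t ∈ I}) = 0; that is, every extremal-depth central region of the centered Gaussian-marginal process is, up to a P_Y-null set, a band of width proportional to the pointwise standard deviation σ. -/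
open MeasureTheory Set Filter
open scoped NNReal ENNReal symmDiff

noncomputable section

/-!
Put `ψ(t, c) = h(t, c σ(t))` and let `z_t` be the inverse of `ψ(t, ·)`, so that
`P{x(t) ≤ ψ(t, c)} = Φ(c)` and the pointwise depth of `g` at `t` is `2 (1 - Φ |z_t(g t)|)`.
For continuous `g` this is continuous in `t` with minimum `2 (1 - Φ (M g))`, where
`M g = sup_t |z_t(g t)|`, and the d-CDF of `g` vanishes below that minimum and is positive above
it. Hence `g ≺ x` exactly when `M x < M g`, and since `M` has no atoms, `ED(f) = P{M > M f}`.
The curves of depth above `α` are therefore `{M < w}` for a quantile `w` of `M`; their pointwise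
envelopes are `ψ(·, ±w)`, which are the pointwise quantiles of levels `Φ(±w)`. So the central
region is exactly the quantile band, and for `P_Y` itself (`ψ(t, c) = c σ(t)`) it is the band
`|f| ≤ w σ`.
-/

open ProbabilityTheory
open scoped Topology

local notation "Φ" => cdf (gaussianReal 0 1)

lemma continuous_cdf (μ : Measure ℝ) [IsProbabilityMeasure μ]
    [NullSingletonClass μ] : Continuous (cdf μ) := by
  refine continuous_iff_continuousAt.2 fun a => ?_
  rw [(monotone_cdf μ).continuousAt_iff_leftLim_eq_rightLim, StieltjesFunction.rightLim_eq]
  have h := (cdf μ).measure_singleton a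
  rw [measure_cdf, measure_singleton, eq_comm, ENNReal.ofReal_eq_zero, sub_nonpos] at h
  exact le_antisymm (Monotone.leftLim_le (monotone_cdf μ) le_rfl) h

lemma exists_cdf_lt_iff (μ : Measure ℝ) [IsProbabilityMeasure μ] {β : ℝ} (hβ : β ∈ Ioo (0 : ℝ) 1) :
    ∃ w, ∀ c, cdf μ c < β ↔ c < w := by
  set S := {c | β ≤ cdf μ c}
  have hne : S.Nonempty := ((tendsto_cdf_atTop μ).eventually_const_le hβ.2).exists
  obtain ⟨c₀, hc₀⟩ := eventually_atBot.1 ((tendsto_cdf_atBot μ).eventually_lt_const hβ.1)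
  have hbdd : BddBelow S := ⟨c₀, fun c hc => le_of_not_ge fun h => (hc₀ c h).not_ge hc⟩
  have hmem : sInf S ∈ S := by
    refine ge_of_tendsto (((cdf μ).right_continuous _).mono Ioi_subset_Ici_self) ?_
    filter_upwards [self_mem_nhdsWithin] with c hc
    obtain ⟨s, hs, hsc⟩ := exists_lt_of_csInf_lt hne hc
    exact hs.trans (monotone_cdf μ hsc.le)
  refine ⟨sInf S, fun c => ⟨fun hc => ?_, fun hc => ?_⟩⟩
  · exact lt_of_not_ge fun h => hc.not_ge (hmem.trans (monotone_cdf μ h))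
  · exact lt_of_not_ge fun h => hc.not_ge (csInf_le hbdd h)

instance unitInterval.isOpenPosMeasure_volume :
    (volume : Measure unitInterval).IsOpenPosMeasure where
  open_pos U hU := by
    rintro ⟨t, ht⟩
    rcases eq_or_ne t 1 with rfl | ht1
    · obtain ⟨l, hl, hsub⟩ := exists_Ioc_subset_of_mem_nhds (hU.mem_nhds ht) ⟨0, zero_lt_one⟩
      refine (measure_pos_of_superset hsub ?_).ne'
      simpa [unitInterval.volume_Ioc] using hl
    · obtain ⟨u, htu, hsub⟩ :=
        exists_Ico_subset_of_mem_nhds (hU.mem_nhds ht) ⟨1, unitInterval.le_one'.lt_of_ne ht1⟩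
      refine (measure_pos_of_superset hsub ?_).ne'
      simpa [unitInterval.volume_Ico] using htu

lemma continuous_stdNormalCDF : Continuous Φ :=
  have := nullSingletonClass_gaussianReal (μ := 0) one_ne_zero
  continuous_cdf _

lemma strictMono_stdNormalCDF : StrictMono Φ := by
  intro a b hab
  have : (gaussianReal 0 1).IsOpenPosMeasure :=
    (gaussianReal_absolutelyContinuous' 0 one_ne_zero).isOpenPosMeasure
  have hpos : 0 < gaussianReal 0 1 (Ioc a b) :=
    measure_pos_of_superset Ioo_subset_Ioc_self (isOpen_Ioo.measure_ne_zero _ (nonempty_Ioo.2 hab))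
  rw [← measure_cdf (gaussianReal 0 1), StieltjesFunction.measure_Ioc, ENNReal.ofReal_pos,
    sub_pos] at hpos
  exact hpos

lemma stdNormalCDF_neg (z : ℝ) : Φ (-z) = 1 - Φ z := by
  have hneg : (gaussianReal 0 1).map (fun x => -x) = gaussianReal 0 1 := by
    simpa using gaussianReal_map_neg (μ := 0) (v := 1)
  have hIio : (gaussianReal 0 1).real (Iio z) = (gaussianReal 0 1).real (Iic z) := by
    have := nullSingletonClass_gaussianReal (μ := 0) one_ne_zero
    exact measureReal_congr Iio_ae_eq_Iic
  rw [cdf_eq_real, cdf_eq_real]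
  conv_lhs => rw [← hneg]
  rw [map_measureReal_apply measurable_neg measurableSet_Iic,
    show (fun x : ℝ => -x) ⁻¹' Iic (-z) = (Iio z)ᶜ by ext; simp,
    measureReal_compl measurableSet_Iio, probReal_univ, hIio]

lemma stdNormalCDF_zero : Φ 0 = 1 / 2 := by
  have := stdNormalCDF_neg 0
  rw [neg_zero] at this
  linarith

lemma stdNormalCDF_lt_one (z : ℝ) : Φ z < 1 :=
  (strictMono_stdNormalCDF (lt_add_one z)).trans_le (cdf_le_one _ _)

lemma abs_one_sub_two_mul_stdNormalCDF (z : ℝ) : |1 - 2 * Φ z| = 2 * Φ |z| - 1 := by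
  rcases le_or_gt 0 z with hz | hz
  · have : 1 / 2 ≤ Φ z := stdNormalCDF_zero ▸ strictMono_stdNormalCDF.monotone hz
    rw [abs_of_nonneg hz, abs_of_nonpos (by linarith)]
    ring
  · have : 1 / 2 < Φ (-z) := stdNormalCDF_zero ▸ strictMono_stdNormalCDF (neg_pos.2 hz)
    rw [abs_of_neg hz, abs_of_nonneg (by linarith [stdNormalCDF_neg z]), stdNormalCDF_neg]
    ring

structure IsFiberwiseOrderIso (ψ : unitInterval × ℝ → ℝ) : Prop where
  strictMono : ∀ t, StrictMono fun c => ψ (t, c)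
  surjective : ∀ t, Function.Surjective fun c => ψ (t, c)

def fiberInv (ψ : unitInterval × ℝ → ℝ) (p : unitInterval × ℝ) : ℝ := sSup {c | ψ (p.1, c) ≤ p.2}

namespace IsFiberwiseOrderIso

variable {ψ : unitInterval × ℝ → ℝ}

lemma fiberInv_apply (hψ : IsFiberwiseOrderIso ψ) (t : unitInterval) (c : ℝ) :
    fiberInv ψ (t, ψ (t, c)) = c := by
  simp only [fiberInv, (hψ.strictMono t).le_iff_le]
  exact csSup_Iic

lemma apply_fiberInv (hψ : IsFiberwiseOrderIso ψ) (t : unitInterval) (y : ℝ) :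
    ψ (t, fiberInv ψ (t, y)) = y := by
  obtain ⟨c, rfl⟩ := hψ.surjective t y
  rw [hψ.fiberInv_apply]

lemma le_fiberInv_iff (hψ : IsFiberwiseOrderIso ψ) {t : unitInterval} {c y : ℝ} :
    c ≤ fiberInv ψ (t, y) ↔ ψ (t, c) ≤ y := by
  conv_rhs => rw [← hψ.apply_fiberInv t y]
  exact (hψ.strictMono t).le_iff_le.symm

lemma lt_fiberInv_iff (hψ : IsFiberwiseOrderIso ψ) {t : unitInterval} {c y : ℝ} :
    c < fiberInv ψ (t, y) ↔ ψ (t, c) < y := by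
  conv_rhs => rw [← hψ.apply_fiberInv t y]
  exact (hψ.strictMono t).lt_iff_lt.symm

lemma fiberInv_lt_iff (hψ : IsFiberwiseOrderIso ψ) {t : unitInterval} {c y : ℝ} :
    fiberInv ψ (t, y) < c ↔ y < ψ (t, c) := by
  simpa only [not_le] using hψ.le_fiberInv_iff.not

lemma comp {h : unitInterval × ℝ → ℝ} (hh : IsFiberwiseOrderIso h) (hψ : IsFiberwiseOrderIso ψ) :
    IsFiberwiseOrderIso fun p => h (p.1, ψ p) where
  strictMono t := (hh.strictMono t).comp (hψ.strictMono t)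
  surjective t := (hh.surjective t).comp (hψ.surjective t)

lemma fiberInv_comp {h : unitInterval × ℝ → ℝ} (hh : IsFiberwiseOrderIso h)
    (hψ : IsFiberwiseOrderIso ψ) (t : unitInterval) (y : ℝ) :
    fiberInv (fun p => h (p.1, ψ p)) (t, h (t, y)) = fiberInv ψ (t, y) := by
  conv_lhs => rw [← hψ.apply_fiberInv t y]
  exact (hh.comp hψ).fiberInv_apply t _

lemma continuous_fiberInv (hψ : IsFiberwiseOrderIso ψ) (hψc : Continuous ψ) :
    Continuous (fiberInv ψ) := by
  refine continuous_iff_continuousAt.2 fun p => Metric.tendsto_nhds.2 fun ε hε => ?_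
  set c := fiberInv ψ p
  have hslice : ∀ d : ℝ, Continuous fun q : unitInterval × ℝ => ψ (q.1, d) := fun d => by fun_prop
  have hlo : ∀ᶠ q in 𝓝 p, ψ (q.1, c - ε) < q.2 :=
    (hslice _).continuousAt.eventually_lt continuous_snd.continuousAt
      (hψ.lt_fiberInv_iff.1 (sub_lt_self c hε))
  have hhi : ∀ᶠ q in 𝓝 p, q.2 < ψ (q.1, c + ε) :=
    continuous_snd.continuousAt.eventually_lt (hslice _).continuousAt
      (hψ.fiberInv_lt_iff.1 (lt_add_of_pos_right c hε))
  filter_upwards [hlo, hhi] with q hq₁ hq₂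
  rw [Real.dist_eq, abs_sub_lt_iff]
  have := hψ.lt_fiberInv_iff.2 hq₁
  have := hψ.fiberInv_lt_iff.2 hq₂
  constructor <;> linarith

end IsFiberwiseOrderIso

def normalizedSup (ψ : unitInterval × ℝ → ℝ) (g : FSp) : ℝ := ⨆ t, |fiberInv ψ (t, g t)|

namespace IsFiberwiseOrderIso

variable {ψ : unitInterval × ℝ → ℝ}

lemma continuous_abs_fiberInv (hψ : IsFiberwiseOrderIso ψ) (hψc : Continuous ψ) (g : FSp) :
    Continuous fun t => |fiberInv ψ (t, g t)| :=
  ((hψ.continuous_fiberInv hψc).comp (continuous_id.prodMk g.continuous)).abs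

lemma bddAbove_abs_fiberInv (hψ : IsFiberwiseOrderIso ψ) (hψc : Continuous ψ) (g : FSp) :
    BddAbove (range fun t => |fiberInv ψ (t, g t)|) :=
  (isCompact_range (hψ.continuous_abs_fiberInv hψc g)).bddAbove

lemma abs_fiberInv_le_normalizedSup (hψ : IsFiberwiseOrderIso ψ) (hψc : Continuous ψ) (g : FSp)
    (t : unitInterval) : |fiberInv ψ (t, g t)| ≤ normalizedSup ψ g :=
  le_ciSup (hψ.bddAbove_abs_fiberInv hψc g) t

lemma exists_abs_fiberInv_eq_normalizedSup (hψ : IsFiberwiseOrderIso ψ) (hψc : Continuous ψ)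
    (g : FSp) : ∃ t, |fiberInv ψ (t, g t)| = normalizedSup ψ g := by
  obtain ⟨t, -, ht⟩ := isCompact_univ.exists_isMaxOn univ_nonempty
    (hψ.continuous_abs_fiberInv hψc g).continuousOn
  exact ⟨t, le_antisymm (hψ.abs_fiberInv_le_normalizedSup hψc g t) (ciSup_le fun s => ht trivial)⟩

lemma normalizedSup_nonneg (hψ : IsFiberwiseOrderIso ψ) (hψc : Continuous ψ) (g : FSp) :
    0 ≤ normalizedSup ψ g :=
  (abs_nonneg _).trans (hψ.abs_fiberInv_le_normalizedSup hψc g 0)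

lemma normalizedSup_lt_iff (hψ : IsFiberwiseOrderIso ψ) (hψc : Continuous ψ) {g : FSp} {w : ℝ} :
    normalizedSup ψ g < w ↔ ∀ t, |fiberInv ψ (t, g t)| < w := by
  refine ⟨fun h t => (hψ.abs_fiberInv_le_normalizedSup hψc g t).trans_lt h, fun h => ?_⟩
  obtain ⟨t, ht⟩ := hψ.exists_abs_fiberInv_eq_normalizedSup hψc g
  exact ht ▸ h t

lemma continuous_normalizedSup (hψ : IsFiberwiseOrderIso ψ) (hψc : Continuous ψ) :
    Continuous (normalizedSup ψ) := by
  let z : C(unitInterval × ℝ, ℝ) := ⟨fiberInv ψ, hψ.continuous_fiberInv hψc⟩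
  have hz : normalizedSup ψ = fun g : FSp => ‖z.comp ((ContinuousMap.id _).prodMk g)‖ := by
    ext g
    simp [normalizedSup, ContinuousMap.norm_eq_iSup_norm, z]
  rw [hz]
  refine ((ContinuousMap.continuous_postcomp z).comp ?_).norm
  exact ContinuousMap.continuous_of_continuous_uncurry _ (continuous_snd.prodMk continuous_eval)

lemma normalizedSup_slice (hψ : IsFiberwiseOrderIso ψ) (hψc : Continuous ψ) (c : ℝ) :
    normalizedSup ψ ⟨fun t => ψ (t, c), by fun_prop⟩ = |c| := by
  simp [normalizedSup, hψ.fiberInv_apply]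

lemma image_eval_setOf_normalizedSup_lt (hψ : IsFiberwiseOrderIso ψ) (hψc : Continuous ψ)
    (w : ℝ) (t : unitInterval) :
    (fun f : FSp => f t) '' {f | normalizedSup ψ f < w} = Ioo (ψ (t, -w)) (ψ (t, w)) := by
  ext y
  constructor
  · rintro ⟨f, hf, rfl⟩
    obtain ⟨hlo, hhi⟩ := abs_lt.1 ((hψ.normalizedSup_lt_iff hψc).1 hf t)
    exact ⟨hψ.lt_fiberInv_iff.1 hlo, hψ.fiberInv_lt_iff.1 hhi⟩
  · rintro ⟨hlo, hhi⟩
    refine ⟨⟨fun s => ψ (s, fiberInv ψ (t, y)), by fun_prop⟩, ?_, hψ.apply_fiberInv t y⟩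
    rw [mem_ofPred_eq, hψ.normalizedSup_slice hψc]
    exact abs_lt.2 ⟨hψ.lt_fiberInv_iff.2 hlo, hψ.fiberInv_lt_iff.2 hhi⟩

lemma normalizedSup_comp {h : unitInterval × ℝ → ℝ}
    (hh : IsFiberwiseOrderIso h) (hψ : IsFiberwiseOrderIso ψ) {T : FSp → FSp}
    (hT : ∀ x t, T x t = h (t, x t)) (x : FSp) :
    normalizedSup (fun p => h (p.1, ψ p)) (T x) = normalizedSup ψ x := by
  simp only [normalizedSup, hT, hh.fiberInv_comp hψ]

end IsFiberwiseOrderIso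

section Depth

variable {P : Measure FSp} {g x : unitInterval → ℝ}

lemma pdepth_le_one (g : unitInterval → ℝ) (t : unitInterval) : pdepth P g t ≤ 1 :=
  sub_le_self _ (abs_nonneg _)

lemma pdepth_nonneg [IsProbabilityMeasure P] (g : unitInterval → ℝ) (t : unitInterval) :
    0 ≤ pdepth P g t := by
  refine sub_nonneg.2 (abs_sub_le_iff.2 ⟨?_, ?_⟩) <;>
    exact (sub_le_self _ ENNReal.toReal_nonneg).trans measureReal_le_one

lemma Rset_comm : Rset P g x = Rset P x g := by
  simp only [Rset, ne_comm]

def HasMinDepth (P : Measure FSp) (g : unitInterval → ℝ) (a : ℝ) : Prop :=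
  Continuous (pdepth P g) ∧ IsLeast (range (pdepth P g)) a

namespace HasMinDepth

variable {a b : ℝ}

lemma dcdf_eq_zero (hg : HasMinDepth P g a) {r : ℝ} (hr : r < a) : dcdf P g r = 0 := by
  have : {t | pdepth P g t ≤ r} = ∅ :=
    eq_empty_of_forall_notMem fun t ht => (hr.trans_le (hg.2.2 ⟨t, rfl⟩)).not_ge ht
  simp [dcdf, this]

lemma dcdf_pos (hg : HasMinDepth P g a) {r : ℝ} (hr : a < r) : 0 < dcdf P g r := by
  obtain ⟨t, ht⟩ := hg.2.1
  have hopen : IsOpen {t | pdepth P g t < r} := isOpen_lt hg.1 continuous_const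
  have hpos : 0 < volume {t | pdepth P g t ≤ r} :=
    (hopen.measure_pos volume ⟨t, show pdepth P g t < r from ht ▸ hr⟩).trans_le
      (measure_mono fun _ hs => le_of_lt (show _ < r from hs))
  exact ENNReal.toReal_pos hpos.ne' (measure_ne_top _ _)

lemma nonneg [IsProbabilityMeasure P] (hg : HasMinDepth P g a) : 0 ≤ a := by
  obtain ⟨t, rfl⟩ := hg.2.1
  exact pdepth_nonneg g t

lemma le_one (hg : HasMinDepth P g a) : a ≤ 1 := by
  obtain ⟨t, rfl⟩ := hg.2.1
  exact pdepth_le_one g t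

variable [IsProbabilityMeasure P]

lemma Ioo_subset_Rset (hg : HasMinDepth P g a) (hx : HasMinDepth P x b) : Ioo a b ⊆ Rset P g x :=
  fun _ hr => ⟨⟨hg.nonneg.trans hr.1.le, hr.2.le.trans hx.le_one⟩,
    ((hx.dcdf_eq_zero hr.2).trans_lt (hg.dcdf_pos hr.1)).ne'⟩

lemma sInf_Rset (hg : HasMinDepth P g a) (hx : HasMinDepth P x b) (hab : a < b) :
    sInf (Rset P g x) = a := by
  have hsub := hg.Ioo_subset_Rset hx
  refine le_antisymm ?_ (le_csInf ((nonempty_Ioo.2 hab).mono hsub) fun r hr => ?_)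
  · calc sInf (Rset P g x) ≤ sInf (Ioo a b) :=
          csInf_le_csInf ⟨0, fun _ hr => hr.1.1⟩ (nonempty_Ioo.2 hab) hsub
      _ = a := csInf_Ioo hab
  · by_contra! hra
    exact hr.2 ((hg.dcdf_eq_zero hra).trans (hx.dcdf_eq_zero (hra.trans hab)).symm)

lemma prec (hg : HasMinDepth P g a) (hx : HasMinDepth P x b) (hab : a < b) : prec P g x := by
  refine ⟨(nonempty_Ioo.2 hab).mono (hg.Ioo_subset_Rset hx), b - a, sub_pos.2 hab, ?_⟩
  rintro r ⟨hr, -⟩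
  rw [hg.sInf_Rset hx hab, add_sub_cancel] at hr
  exact (hx.dcdf_eq_zero hr.2).trans_lt (hg.dcdf_pos hr.1)

lemma not_prec (hg : HasMinDepth P g a) (hx : HasMinDepth P x b) (hba : b < a) :
    ¬ _root_.prec P g x := by
  rintro ⟨-, δ, hδ, hall⟩
  rw [Rset_comm, hx.sInf_Rset hg hba] at hall
  set r := min (b + δ / 2) ((a + b) / 2)
  have hbr : b < r := lt_min (by linarith) (by linarith)
  have hra : r < a := min_lt_of_right_lt (by linarith)
  have := hall r ⟨⟨hbr, min_lt_of_left_lt (by linarith)⟩, hx.nonneg.trans hbr.le,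
    hra.le.trans hg.le_one⟩
  linarith [hg.dcdf_eq_zero hra, hx.dcdf_pos hbr]

end HasMinDepth

end Depth

structure HasGaussianMarginals (P : Measure FSp) (ψ : unitInterval × ℝ → ℝ) : Prop where
  measure_le : ∀ t c, P {x : FSp | x t ≤ ψ (t, c)} = gaussianReal 0 1 (Iic c)
  measure_eq : ∀ t y, P {x : FSp | x t = y} = 0

namespace HasGaussianMarginals

variable {P : Measure FSp} {ψ : unitInterval × ℝ → ℝ}

lemma measureReal_le (hP : HasGaussianMarginals P ψ) (hψ : IsFiberwiseOrderIso ψ)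
    (t : unitInterval) (y : ℝ) : P.real {x : FSp | x t ≤ y} = Φ (fiberInv ψ (t, y)) := by
  have := hP.measure_le t (fiberInv ψ (t, y))
  rw [hψ.apply_fiberInv] at this
  rw [measureReal_def, this, cdf_eq_real, measureReal_def]

lemma quant_stdNormalCDF (hP : HasGaussianMarginals P ψ) (hψ : IsFiberwiseOrderIso ψ)
    (c : ℝ) (t : unitInterval) : quant P (Φ c) t = ψ (t, c) := by
  have : {y | Φ c ≤ margF P t y} = Ici (ψ (t, c)) := by
    ext y
    rw [mem_ofPred_eq, margF, ← measureReal_def, hP.measureReal_le hψ,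
      strictMono_stdNormalCDF.le_iff_le, hψ.le_fiberInv_iff, mem_Ici]
  rw [quant, this, csInf_Ici]

lemma measureReal_lt (hP : HasGaussianMarginals P ψ) (hψ : IsFiberwiseOrderIso ψ)
    (t : unitInterval) (y : ℝ) : P.real {x : FSp | x t < y} = Φ (fiberInv ψ (t, y)) := by
  have : {x : FSp | x t < y} = {x : FSp | x t ≤ y} \ {x : FSp | x t = y} := by
    ext; simp [lt_iff_le_and_ne]
  rw [← hP.measureReal_le hψ, this, measureReal_def, measure_sdiff_null (hP.measure_eq t y),
    measureReal_def]

variable [IsProbabilityMeasure P]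

lemma measureReal_gt (hP : HasGaussianMarginals P ψ) (hψ : IsFiberwiseOrderIso ψ)
    (t : unitInterval) (y : ℝ) : P.real {x : FSp | y < x t} = 1 - Φ (fiberInv ψ (t, y)) := by
  have hmeas : MeasurableSet {x : FSp | x t ≤ y} :=
    measurableSet_le (continuous_eval_const t).measurable measurable_const
  rw [← hP.measureReal_le hψ, ← probReal_univ (μ := P), ← measureReal_compl hmeas]
  congr 1
  ext; simp

lemma pdepth_eq (hP : HasGaussianMarginals P ψ) (hψ : IsFiberwiseOrderIso ψ)
    (g : unitInterval → ℝ) (t : unitInterval) :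
    pdepth P g t = 2 * (1 - Φ |fiberInv ψ (t, g t)|) := by
  have := abs_one_sub_two_mul_stdNormalCDF (fiberInv ψ (t, g t))
  simp only [pdepth, ← measureReal_def, hP.measureReal_gt hψ, hP.measureReal_lt hψ]
  rw [show 1 - Φ (fiberInv ψ (t, g t)) - Φ (fiberInv ψ (t, g t)) =
    1 - 2 * Φ (fiberInv ψ (t, g t)) by ring, this]
  ring

lemma hasMinDepth (hP : HasGaussianMarginals P ψ) (hψ : IsFiberwiseOrderIso ψ)
    (hψc : Continuous ψ) (g : FSp) :
    HasMinDepth P g (2 * (1 - Φ (normalizedSup ψ g))) := by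
  have hdepth : pdepth P g = fun t => 2 * (1 - Φ |fiberInv ψ (t, g t)|) :=
    funext (hP.pdepth_eq hψ g)
  refine ⟨hdepth ▸ continuous_const.mul (continuous_const.sub
    (continuous_stdNormalCDF.comp (hψ.continuous_abs_fiberInv hψc g))), ?_, ?_⟩
  · obtain ⟨t, ht⟩ := hψ.exists_abs_fiberInv_eq_normalizedSup hψc g
    exact ⟨t, by rw [hP.pdepth_eq hψ, ht]⟩
  · rintro _ ⟨t, rfl⟩
    have := strictMono_stdNormalCDF.monotone (hψ.abs_fiberInv_le_normalizedSup hψc g t)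
    rw [hdepth]
    linarith

lemma ed_eq (hP : HasGaussianMarginals P ψ) (hψ : IsFiberwiseOrderIso ψ) (hψc : Continuous ψ)
    (hM : ∀ c, P {x : FSp | normalizedSup ψ x = c} = 0) (f : FSp) :
    ed P f = P.real {x : FSp | normalizedSup ψ f < normalizedSup ψ x} := by
  set M := normalizedSup ψ
  have hf := hP.hasMinDepth hψ hψc f
  have hdeeper : {x : FSp | M f < M x} ⊆ {x : FSp | ¬ prec P f x} :=
    fun x hx => hf.not_prec (hP.hasMinDepth hψ hψc x) (by linarith [strictMono_stdNormalCDF hx])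
  have hshallower : {x : FSp | ¬ prec P f x} ⊆ {x : FSp | M f < M x} ∪ {x : FSp | M x = M f} := by
    intro x hx
    rcases lt_trichotomy (M f) (M x) with h | h | h
    · exact Or.inl h
    · exact Or.inr h.symm
    · exact absurd (hf.prec (hP.hasMinDepth hψ hψc x) (by linarith [strictMono_stdNormalCDF h])) hx
  refine congrArg ENNReal.toReal (le_antisymm ?_ (measure_mono hdeeper))
  calc P {x : FSp | ¬ prec P f x} ≤ P {x : FSp | M f < M x} + P {x : FSp | M x = M f} :=
        (measure_mono hshallower).trans (measure_union_le _ _)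
    _ = P {x : FSp | M f < M x} := by rw [hM, add_zero]

lemma exists_lt_ed_iff (hP : HasGaussianMarginals P ψ) (hψ : IsFiberwiseOrderIso ψ)
    (hψc : Continuous ψ) (hM : ∀ c, P {x : FSp | normalizedSup ψ x = c} = 0) {α : ℝ}
    (hα : α ∈ Ioo (0 : ℝ) 1) : ∃ w > 0, ∀ f : FSp, α < ed P f ↔ normalizedSup ψ f < w := by
  have hMc := hψ.continuous_normalizedSup hψc
  set μ := P.map (normalizedSup ψ)
  have : IsProbabilityMeasure μ := Measure.isProbabilityMeasure_map hMc.aemeasurable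
  have hτ : ∀ c, P.real {x : FSp | c < normalizedSup ψ x} = 1 - cdf μ c := fun c => by
    rw [cdf_eq_real, map_measureReal_apply hMc.measurable measurableSet_Iic,
      ← probReal_univ (μ := P), ← measureReal_compl (measurableSet_Iic.preimage hMc.measurable)]
    congr 1
    ext
    simp
  obtain ⟨w, hw⟩ := exists_cdf_lt_iff μ (β := 1 - α) ⟨by linarith [hα.2], by linarith [hα.1]⟩
  have hμ0 : cdf μ 0 = 0 := by
    rw [cdf_eq_real, map_measureReal_apply hMc.measurable measurableSet_Iic, measureReal_def]
    have : normalizedSup ψ ⁻¹' Iic 0 = {x : FSp | normalizedSup ψ x = 0} := by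
      ext x
      exact (hψ.normalizedSup_nonneg hψc x).ge_iff_eq'
    rw [this, hM, ENNReal.toReal_zero]
  refine ⟨w, (hw 0).1 (by linarith [hα.2]), fun f => ?_⟩
  rw [hP.ed_eq hψ hψc hM, hτ, ← hw]
  constructor <;> intro h <;> linarith

lemma exists_centralRegion_eq (hP : HasGaussianMarginals P ψ) (hψ : IsFiberwiseOrderIso ψ)
    (hψc : Continuous ψ) (hM : ∀ c, P {x : FSp | normalizedSup ψ x = c} = 0) {α : ℝ}
    (hα : α ∈ Ioo (0 : ℝ) 1) :
    ∃ w > 0, centralRegion P α = {f : FSp | ∀ t, ψ (t, -w) ≤ f t ∧ f t ≤ ψ (t, w)} := by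
  obtain ⟨w, hw, hiff⟩ := hP.exists_lt_ed_iff hψ hψc hM hα
  have hdeep : {f : FSp | α < ed P f} = {f : FSp | normalizedSup ψ f < w} := by
    ext f
    exact hiff f
  have hlt (t : unitInterval) : ψ (t, -w) < ψ (t, w) := hψ.strictMono t (neg_lt_self hw)
  refine ⟨w, hw, ?_⟩
  simp only [centralRegion, envL, envU, hdeep, hψ.image_eval_setOf_normalizedSup_lt hψc,
    csInf_Ioo (hlt _), csSup_Ioo (hlt _)]

end HasGaussianMarginals

section Gaussian

variable {σ : unitInterval → ℝ}

lemma isFiberwiseOrderIso_mul (hσ : ∀ t, 0 < σ t) : IsFiberwiseOrderIso fun p => p.2 * σ p.1 where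
  strictMono t := strictMono_mul_right_of_pos (hσ t)
  surjective t y := ⟨y / σ t, div_mul_cancel₀ y (hσ t).ne'⟩

lemma normalizedSup_mul (hσ : ∀ t, 0 < σ t) (x : FSp) :
    normalizedSup (fun p => p.2 * σ p.1) x = ⨆ t, |x t| / σ t := by
  refine iSup_congr fun t => ?_
  have := (isFiberwiseOrderIso_mul hσ).fiberInv_apply t (x t / σ t)
  rw [div_mul_cancel₀ _ (hσ t).ne'] at this
  rw [this, abs_div, abs_of_pos (hσ t)]

lemma gaussianReal_Iic_mul {s : ℝ} (hs : 0 < s) (c : ℝ) :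
    gaussianReal 0 ⟨s ^ 2, sq_nonneg _⟩ (Iic (c * s)) = gaussianReal 0 1 (Iic c) := by
  have hmap : (gaussianReal 0 1).map (s * ·) = gaussianReal 0 ⟨s ^ 2, sq_nonneg _⟩ := by
    have h := gaussianReal_map_const_mul (μ := 0) (v := 1) s
    rw [mul_zero, mul_one] at h
    exact h
  rw [← hmap, Measure.map_apply (measurable_const_mul s) measurableSet_Iic]
  congr 1
  ext z
  simp [mul_comm c, mul_le_mul_iff_right₀ hs]

lemma hasGaussianMarginals_mul {P : Measure FSp} (hσ : ∀ t, 0 < σ t)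
    (hmargin : ∀ t : unitInterval,
      P.map (fun x : FSp => x t) = gaussianReal 0 ⟨(σ t) ^ 2, sq_nonneg _⟩) :
    HasGaussianMarginals P fun p => p.2 * σ p.1 where
  measure_le t c := by
    rw [← gaussianReal_Iic_mul (hσ t), ← hmargin t,
      Measure.map_apply (continuous_eval_const t).measurable measurableSet_Iic]
    rfl
  measure_eq t y := by
    have := nullSingletonClass_gaussianReal (μ := 0) (v := ⟨(σ t) ^ 2, sq_nonneg _⟩)
      fun h => (pow_pos (hσ t) 2).ne' (congrArg NNReal.toReal h)
    rw [← measure_singleton (μ := gaussianReal 0 ⟨(σ t) ^ 2, sq_nonneg _⟩) y, ← hmargin t,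
      Measure.map_apply (continuous_eval_const t).measurable (measurableSet_singleton y)]
    rfl

end Gaussian

lemma HasGaussianMarginals.map {P : Measure FSp} {ψ h : unitInterval × ℝ → ℝ}
    (hP : HasGaussianMarginals P ψ) (hh : IsFiberwiseOrderIso h) {T : FSp → FSp}
    (hT : ∀ x t, T x t = h (t, x t)) (hTm : Measurable T) :
    HasGaussianMarginals (P.map T) fun p => h (p.1, ψ p) where
  measure_le t c := by
    rw [Measure.map_apply hTm (measurableSet_le (continuous_eval_const t).measurable
      measurable_const), ← hP.measure_le t c]
    congr 1
    ext x
    simp [hT, (hh.strictMono t).le_iff_le]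
  measure_eq t y := by
    obtain ⟨s, rfl⟩ := hh.surjective t y
    rw [Measure.map_apply hTm (measurableSet_eq_fun (continuous_eval_const t).measurable
      measurable_const), ← hP.measure_eq t s]
    congr 1
    ext x
    simp [hT, (hh.strictMono t).injective.eq_iff]

/-- **Corollary 1 (extremal-depth central regions of Gaussian-type
processes).** (a) every ED central region coincides a.s. with a pointwise
quantile region; (b) when `h(t,s) = s`, every ED central region of the centered
process is a.s. a band of width proportional to `σ`. -/
theorem gaussian_central_regions
    (σ : C(unitInterval, ℝ)) (hσ : ∀ t, 0 < σ t)
    (P_Y : Measure FSp) [IsProbabilityMeasure P_Y]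
    (hmargin : ∀ t : unitInterval,
      P_Y.map (fun x : FSp => x t) =
        ProbabilityTheory.gaussianReal 0 ⟨(σ t) ^ 2, sq_nonneg _⟩)
    (hatom : ∀ c : ℝ, P_Y {x : FSp | (⨆ t, |x t| / σ t) = c} = 0)
    (h : C(unitInterval × ℝ, ℝ))
    (hmono : ∀ t : unitInterval, StrictMono fun s => h (t, s))
    (hsurj : ∀ t : unitInterval, Function.Surjective fun s => h (t, s))
    (T : FSp → FSp) (hT : ∀ (x : FSp) (t : unitInterval), T x t = h (t, x t))
    (hTcont : Continuous T)
    (P : Measure FSp) (hP : P = P_Y.map T) :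
    (∀ α ∈ Ioo (0:ℝ) 1, ∃ γ ∈ Ioo (0:ℝ) 1,
      P (symmDiff (centralRegion P α)
        {f : FSp | ∀ t, quant P (γ/2) t ≤ f t ∧ f t ≤ quant P (1 - γ/2) t}) = 0) ∧
    ((∀ (t : unitInterval) (s : ℝ), h (t, s) = s) →
      ∀ α ∈ Ioo (0:ℝ) 1, ∃ w > (0:ℝ),
        P_Y (symmDiff (centralRegion P_Y α)
          {f : FSp | ∀ t, |f t| ≤ w * σ t}) = 0) := by
  have hψ₀ := isFiberwiseOrderIso_mul hσ
  have hP₀ := hasGaussianMarginals_mul hσ hmargin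
  have hM₀ : ∀ c, P_Y {x : FSp | normalizedSup (fun p => p.2 * σ p.1) x = c} = 0 := by
    simpa only [normalizedSup_mul hσ] using hatom
  have hh : IsFiberwiseOrderIso h := ⟨hmono, hsurj⟩
  have hψ := hh.comp hψ₀
  have : IsProbabilityMeasure P := hP ▸ Measure.isProbabilityMeasure_map hTcont.aemeasurable
  have hPψ : HasGaussianMarginals P _ := hP ▸ hP₀.map hh hT hTcont.measurable
  have hM : ∀ c, P {x : FSp | normalizedSup (fun p => h (p.1, p.2 * σ p.1)) x = c} = 0 := by
    intro c
    rw [hP, Measure.map_apply hTcont.measurable (measurableSet_eq_fun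
      (hψ.continuous_normalizedSup (by fun_prop)).measurable measurable_const)]
    simpa only [preimage_ofPred_eq, hh.normalizedSup_comp hψ₀ hT] using hM₀ c
  refine ⟨fun α hα => ?_, fun _ α hα => ?_⟩
  · obtain ⟨w, hw, hC⟩ := hPψ.exists_centralRegion_eq hψ (by fun_prop) hM hα
    have hlo : 0 < Φ (-w) := by linarith [stdNormalCDF_neg w, stdNormalCDF_lt_one w]
    have hhi : Φ (-w) < 1 / 2 := stdNormalCDF_zero ▸ strictMono_stdNormalCDF (neg_neg_of_pos hw)
    refine ⟨2 * Φ (-w), ⟨by linarith, by linarith⟩, ?_⟩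
    rw [mul_div_cancel_left₀ _ two_ne_zero, show 1 - Φ (-w) = Φ w by rw [stdNormalCDF_neg]; ring]
    simp only [hPψ.quant_stdNormalCDF hψ, ← hC, symmDiff_self, bot_eq_empty, measure_empty]
  · obtain ⟨w, hw, hC⟩ := hP₀.exists_centralRegion_eq hψ₀ (by fun_prop) hM₀ hα
    refine ⟨w, hw, ?_⟩
    simp only [hC, neg_mul, ← abs_le, symmDiff_self, bot_eq_empty, measure_empty]
end
end

section
/- Maximality of the center: Suppose m ∈ C(I,ℝ) satisfies: for every t ∈ I and every y ∈ ℝ, |P{x : x(t) > m(t)} − P{x : x(t) < m(t)}| ≤ |P{x : x(t) > y} − P{x : x(t) < y}| (m is a generalized pointwise median of P). Then for every Borel measurable f : I → ℝ one has D_m(t) ≥ D_f(t) for all t ∈ I, Φ_m(r) ≤ Φ_f(r) for all r ∈ [0,1], and m ⪰ f. Consequently ED(m,P) = 1, i.e., the generalized median attains the maximal extremal depth. -/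
open MeasureTheory Set Filter
open scoped NNReal ENNReal symmDiff

noncomputable section

lemma median_key (P : Measure FSp) [IsProbabilityMeasure P]
    (m : FSp)
    (hmed : ∀ (t : unitInterval) (y : ℝ),
      |(P {x : FSp | m t < x t}).toReal - (P {x : FSp | x t < m t}).toReal| ≤
      |(P {x : FSp | y < x t}).toReal - (P {x : FSp | x t < y}).toReal|)
    (f : unitInterval → ℝ) :
    (∀ t, pdepth P f t ≤ pdepth P ⇑m t) ∧
      (∀ r : ℝ, dcdf P ⇑m r ≤ dcdf P f r) ∧ ¬ prec P ⇑m f := by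
  have hpt : ∀ t, pdepth P f t ≤ pdepth P ⇑m t := by
    intro t
    have := hmed t (f t)
    simp only [pdepth]
    linarith
  have hcdf : ∀ r : ℝ, dcdf P ⇑m r ≤ dcdf P f r := by
    intro r
    have hsub : {t : unitInterval | pdepth P ⇑m t ≤ r} ⊆
        {t : unitInterval | pdepth P f t ≤ r} :=
      fun t ht => le_trans (hpt t) ht
    exact ENNReal.toReal_mono (measure_ne_top _ _) (measure_mono hsub)
  refine ⟨hpt, hcdf, ?_⟩
  rintro ⟨⟨r₀, hr₀⟩, δ, hδ, hlt⟩
  -- dcdfs agree at r = 1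
  have h1 : ∀ g : unitInterval → ℝ, dcdf P g 1 = (volume (univ : Set unitInterval)).toReal := by
    intro g
    have : {t : unitInterval | pdepth P g t ≤ 1} = univ := by
      ext t
      simp only [mem_setOf_eq, mem_univ, iff_true, pdepth]
      have := abs_nonneg ((P {x : FSp | g t < x t}).toReal - (P {x : FSp | x t < g t}).toReal)
      linarith
    simp [dcdf, this]
  have hr₀mem : r₀ ∈ Icc (0:ℝ) 1 := hr₀.1
  have hr₀ne : r₀ ≠ 1 := by
    intro h
    exact hr₀.2 (by rw [h, h1 ⇑m, h1 f])
  have hr₀lt : r₀ < 1 := lt_of_le_of_ne hr₀mem.2 hr₀ne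
  set s := sInf (Rset P ⇑m f) with hs
  have hsle : s ≤ r₀ := csInf_le ⟨0, fun y hy => hy.1.1⟩ hr₀
  have hs0 : 0 ≤ s := le_csInf ⟨r₀, hr₀⟩ (fun y hy => hy.1.1)
  have hslt1 : s < 1 := lt_of_le_of_lt hsle hr₀lt
  set r := min (s + δ / 2) ((s + 1) / 2) with hr
  have hrs : s < r := lt_min (by linarith) (by linarith)
  have hr1 : r < 1 := lt_of_le_of_lt (min_le_right _ _) (by linarith)
  have hrI : r ∈ Ioo s (s + δ) ∩ Icc (0:ℝ) 1 :=
    ⟨⟨hrs, lt_of_le_of_lt (min_le_left _ _) (by linarith)⟩, ⟨by linarith, hr1.le⟩⟩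
  exact absurd (hcdf r) (not_le.mpr (hlt r hrI))

/-- **Maximality of the center**: a generalized pointwise median has maximal
pointwise depth, smallest d-CDF, dominates every function in the ordering, and
has extremal depth one. -/
theorem median_maximal (P : Measure FSp) [IsProbabilityMeasure P]
    (m : FSp)
    (hmed : ∀ (t : unitInterval) (y : ℝ),
      |(P {x : FSp | m t < x t}).toReal - (P {x : FSp | x t < m t}).toReal| ≤
      |(P {x : FSp | y < x t}).toReal - (P {x : FSp | x t < y}).toReal|) :
    (∀ f : unitInterval → ℝ, Measurable f →
      (∀ t, pdepth P f t ≤ pdepth P ⇑m t) ∧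
      (∀ r ∈ Icc (0:ℝ) 1, dcdf P ⇑m r ≤ dcdf P f r) ∧
      ¬ prec P ⇑m f) ∧
    ed P ⇑m = 1 := by
  constructor
  · intro f _
    obtain ⟨h1, h2, h3⟩ := median_key P m hmed f
    exact ⟨h1, fun r _ => h2 r, h3⟩
  · have : {x : FSp | ¬ prec P ⇑m ⇑x} = univ := by
      ext x
      simp only [mem_setOf_eq, mem_univ, iff_true]
      exact (median_key P m hmed ⇑x).2.2
    simp [ed, this]
end
end

section
/- Monotonicity from the center: Suppose m ∈ C(I,ℝ) satisfies: for every t ∈ I and every y ∈ ℝ, |P{x : x(t) > m(t)} − P{x : x(t) < m(t)}| ≤ |P{x : x(t) > y} − P{x : x(t) < y}| (m is a generalized pointwise median of P). Let f, g : I → ℝ be Borel measurable such that for every t ∈ I, either m(t) ≤ g(t) ≤ f(t) or m(t) ≥ g(t) ≥ f(t). Then D_g(t) ≥ D_f(t) for all t ∈ I, Φ_g(r) ≤ Φ_f(r) for all r ∈ [0,1], and g ⪰ f; that is, moving monotonically away from the center cannot increase depth. -/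
open MeasureTheory Set Filter
open scoped NNReal ENNReal symmDiff

noncomputable section

/-- The signed quantity `Δ_y(t) = P{x : x(t) > y} - P{x : x(t) < y}` is
nonincreasing in `y`. -/
lemma delta_anti (P : Measure FSp) [IsProbabilityMeasure P] (t : unitInterval)
    {y z : ℝ} (hyz : y ≤ z) :
    (P {x : FSp | z < x t}).toReal - (P {x : FSp | x t < z}).toReal ≤
    (P {x : FSp | y < x t}).toReal - (P {x : FSp | x t < y}).toReal := by
  have h1 : P {x : FSp | z < x t} ≤ P {x : FSp | y < x t} :=
    measure_mono fun x hx => lt_of_le_of_lt hyz hx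
  have h2 : P {x : FSp | x t < y} ≤ P {x : FSp | x t < z} :=
    measure_mono fun x hx => lt_of_lt_of_le hx hyz
  exact sub_le_sub (ENNReal.toReal_mono (measure_ne_top P _) h1)
    (ENNReal.toReal_mono (measure_ne_top P _) h2)

/-- **Monotonicity from the center**: moving monotonically away from a
generalized pointwise median cannot increase depth. -/
theorem monotone_from_center (P : Measure FSp) [IsProbabilityMeasure P]
    (m : FSp)
    (hmed : ∀ (t : unitInterval) (y : ℝ),
      |(P {x : FSp | m t < x t}).toReal - (P {x : FSp | x t < m t}).toReal| ≤
      |(P {x : FSp | y < x t}).toReal - (P {x : FSp | x t < y}).toReal|)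
    (f g : unitInterval → ℝ) (hf : Measurable f) (hg : Measurable g)
    (hsand : ∀ t : unitInterval,
      (m t ≤ g t ∧ g t ≤ f t) ∨ (f t ≤ g t ∧ g t ≤ m t)) :
    (∀ t, pdepth P f t ≤ pdepth P g t) ∧
    (∀ r ∈ Icc (0:ℝ) 1, dcdf P g r ≤ dcdf P f r) ∧
    ¬ prec P g f := by
  -- pointwise depth comparison
  have hpd : ∀ t, pdepth P f t ≤ pdepth P g t := by
    intro t
    have key : |(P {x : FSp | g t < x t}).toReal - (P {x : FSp | x t < g t}).toReal| ≤
        |(P {x : FSp | f t < x t}).toReal - (P {x : FSp | x t < f t}).toReal| := by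
      rcases hsand t with ⟨hmg, hgf⟩ | ⟨hfg, hgm⟩
      · have hfg' := delta_anti P t hgf
        have hgm' := delta_anti P t hmg
        rcases le_or_gt 0
            ((P {x : FSp | g t < x t}).toReal - (P {x : FSp | x t < g t}).toReal) with h | h
        · calc |(P {x : FSp | g t < x t}).toReal - (P {x : FSp | x t < g t}).toReal|
              = (P {x : FSp | g t < x t}).toReal - (P {x : FSp | x t < g t}).toReal :=
                abs_of_nonneg h
            _ ≤ (P {x : FSp | m t < x t}).toReal - (P {x : FSp | x t < m t}).toReal := hgm'
            _ ≤ |(P {x : FSp | m t < x t}).toReal - (P {x : FSp | x t < m t}).toReal| :=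
                le_abs_self _
            _ ≤ _ := hmed t (f t)
        · calc |(P {x : FSp | g t < x t}).toReal - (P {x : FSp | x t < g t}).toReal|
              = -((P {x : FSp | g t < x t}).toReal - (P {x : FSp | x t < g t}).toReal) :=
                abs_of_neg h
            _ ≤ -((P {x : FSp | f t < x t}).toReal - (P {x : FSp | x t < f t}).toReal) := by
                linarith
            _ ≤ _ := neg_le_abs _
      · have hgf' := delta_anti P t hfg
        have hmg' := delta_anti P t hgm
        rcases le_or_gt ((P {x : FSp | g t < x t}).toReal - (P {x : FSp | x t < g t}).toReal)
            0 with h | h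
        · calc |(P {x : FSp | g t < x t}).toReal - (P {x : FSp | x t < g t}).toReal|
              = -((P {x : FSp | g t < x t}).toReal - (P {x : FSp | x t < g t}).toReal) :=
                abs_of_nonpos h
            _ ≤ -((P {x : FSp | m t < x t}).toReal - (P {x : FSp | x t < m t}).toReal) := by
                linarith
            _ ≤ |(P {x : FSp | m t < x t}).toReal - (P {x : FSp | x t < m t}).toReal| :=
                neg_le_abs _
            _ ≤ _ := hmed t (f t)
        · calc |(P {x : FSp | g t < x t}).toReal - (P {x : FSp | x t < g t}).toReal|
              = (P {x : FSp | g t < x t}).toReal - (P {x : FSp | x t < g t}).toReal :=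
                abs_of_pos h
            _ ≤ (P {x : FSp | f t < x t}).toReal - (P {x : FSp | x t < f t}).toReal := hgf'
            _ ≤ _ := le_abs_self _
    exact sub_le_sub_left key 1
  -- dcdf comparison (for all r, in fact)
  have hvol : ∀ (s : Set unitInterval), volume s ≠ ∞ := fun s =>
    ne_of_lt (lt_of_le_of_lt (measure_mono (subset_univ s))
      (measure_lt_top _ _))
  have hdc : ∀ r : ℝ, dcdf P g r ≤ dcdf P f r := by
    intro r
    apply ENNReal.toReal_mono (hvol _)
    apply measure_mono
    intro t ht
    exact le_trans (hpd t) ht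
  refine ⟨hpd, fun r _ => hdc r, ?_⟩
  -- not prec
  rintro ⟨⟨r0, hr0Icc, hr0ne⟩, δ, hδ, hlt⟩
  set R := Rset P g f with hR
  have hRsub : R ⊆ Icc (0:ℝ) 1 := fun r hr => hr.1
  have hRne : R.Nonempty := ⟨r0, hr0Icc, hr0ne⟩
  have hbdd : BddBelow R := ⟨0, fun r hr => (hRsub hr).1⟩
  have hInf0 : 0 ≤ sInf R := le_csInf hRne fun r hr => (hRsub hr).1
  have hInf1 : sInf R ≤ 1 := le_trans (csInf_le hbdd hRne.choose_spec)
    (hRsub hRne.choose_spec).2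
  -- 1 is not in R since both dcdfs are equal at 1 (both sets are univ)
  have hone : (1:ℝ) ∉ R := by
    intro h1
    apply h1.2
    have huniv : ∀ h : unitInterval → ℝ, {t : unitInterval | pdepth P h t ≤ 1} = univ := by
      intro h
      ext t
      simp only [mem_setOf_eq, mem_univ, iff_true]
      unfold pdepth
      have := abs_nonneg ((P {x : FSp | h t < x t}).toReal - (P {x : FSp | x t < h t}).toReal)
      linarith
    unfold dcdf
    rw [huniv g, huniv f]
  have hInflt1 : sInf R < 1 := by
    rcases lt_or_eq_of_le hInf1 with h | h
    · exact h
    · exfalso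
      apply hone
      rcases hRne with ⟨r, hrR⟩
      have h1 : r ≤ 1 := (hRsub hrR).2
      have h2 : (1:ℝ) ≤ r := h ▸ csInf_le hbdd hrR
      rwa [le_antisymm h1 h2] at hrR
  -- pick r in the interval
  set r₁ : ℝ := min (sInf R + δ) 1 with hr₁
  have hlt1 : sInf R < r₁ := lt_min (by linarith) hInflt1
  obtain ⟨r, hra, hrb⟩ := exists_between hlt1
  have hrmem : r ∈ Ioo (sInf R) (sInf R + δ) ∩ Icc (0:ℝ) 1 := by
    constructor
    · exact ⟨hra, lt_of_lt_of_le hrb (min_le_left _ _)⟩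
    · exact ⟨le_of_lt (lt_of_le_of_lt hInf0 hra),
        le_of_lt (lt_of_lt_of_le hrb (min_le_right _ _))⟩
  exact absurd (hdc r) (not_le.mpr (hlt r hrmem))
end
end

section
/- Null-at-the-boundary property of extremal depth: Assume: (i) every marginal CDF F_t is continuous on ℝ; (ii) for each c > 0 the set A_c := {x ∈ C(I,ℝ) : D_x(t) > c for all t ∈ I} is P-measurable, and P(A_c) → 1 as c → 0⁺. Let U ⊆ I be a nonempty open subinterval, let (α_n) be a strictly decreasing sequence in (0, 1/2) with α_n → 0, and let f_n : I → ℝ be Borel measurable functions such that for every n, either f_n(t) ≤ q_{α_n}(t) for all t ∈ U, or f_n(t) ≥ q_{1−α_n}(t) for all t ∈ U. Then ED(f_n,P) → 0 as n → ∞. -/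
open MeasureTheory Set Filter
open scoped NNReal ENNReal symmDiff

noncomputable section

/-! If the marginals are continuous, `D_g(t) = 1 - |1 - 2 F_t(g(t))|`, so a function lying beyond
the `α`-quantiles on `U` has depth at most `2α` on `U`, and its d-CDF is positive at `2α`. A path
`x ∈ A_c` with `c > 2α` has `Φ_x = 0` on `(-∞, c]`, so `f ≺ x`; hence `ED(f) ≤ 1 - P(A_c)`, which
is small once `c` is small and `α` is smaller still. -/

namespace ProbabilityTheory

lemma measureReal_Iio_eq_cdf (μ : Measure ℝ) [IsProbabilityMeasure μ] {y : ℝ}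
    (hy : ContinuousAt (cdf μ) y) : μ.real (Iio y) = cdf μ y := by
  have hleft : Function.leftLim (cdf μ) y = cdf μ y :=
    leftLim_eq_of_tendsto (hy.tendsto.mono_left nhdsWithin_le_nhds)
  conv_lhs => rw [← measure_cdf μ]
  rw [measureReal_def, StieltjesFunction.measure_Iio _ (tendsto_cdf_atBot μ), sub_zero, hleft,
    ENNReal.toReal_ofReal (cdf_nonneg μ y)]

end ProbabilityTheory

lemma Monotone.apply_sInf_preimage_Ici_eq {F : ℝ → ℝ} (hmono : Monotone F) (hcont : Continuous F)
    {α lo hi : ℝ} (hlo : F lo < α) (hhi : α ≤ F hi) : F (sInf (F ⁻¹' Ici α)) = α := by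
  have hne : (F ⁻¹' Ici α).Nonempty := ⟨hi, hhi⟩
  have hbdd : BddBelow (F ⁻¹' Ici α) :=
    ⟨lo, fun y hy => le_of_not_ge fun hylo => (hlo.trans_le hy).not_ge (hmono hylo)⟩
  obtain ⟨y, hy⟩ := intermediate_value_univ lo hi hcont ⟨hlo.le, hhi⟩
  refine le_antisymm ?_ ((isClosed_Ici.preimage hcont).csInf_mem hne hbdd)
  exact (hmono (csInf_le hbdd (show α ≤ F y from hy.ge))).trans_eq hy

section Depth

variable {P : Measure FSp} [IsProbabilityMeasure P]

lemma measurable_eval_FSp (t : unitInterval) : Measurable fun x : FSp => x t :=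
  (continuous_eval_const t).measurable

instance (t : unitInterval) : IsProbabilityMeasure (P.map fun x : FSp => x t) :=
  Measure.isProbabilityMeasure_map (measurable_eval_FSp t).aemeasurable

lemma margF_eq_cdf (t : unitInterval) :
    margF P t = ProbabilityTheory.cdf (P.map fun x : FSp => x t) := by
  ext y
  rw [ProbabilityTheory.cdf_eq_real, measureReal_def,
    Measure.map_apply (measurable_eval_FSp t) measurableSet_Iic]
  rfl

lemma monotone_margF (t : unitInterval) : Monotone (margF P t) := by
  rw [margF_eq_cdf]
  exact (ProbabilityTheory.cdf _).mono

lemma measureReal_eval_lt (t : unitInterval) (hF : Continuous (margF P t)) (y : ℝ) :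
    P.real {x : FSp | x t < y} = margF P t y := by
  rw [margF_eq_cdf] at hF ⊢
  rw [← ProbabilityTheory.measureReal_Iio_eq_cdf _ hF.continuousAt,
    map_measureReal_apply (measurable_eval_FSp t) measurableSet_Iio]
  rfl

lemma measureReal_lt_eval (t : unitInterval) (y : ℝ) :
    P.real {x : FSp | y < x t} = 1 - margF P t y := by
  have hcompl : {x : FSp | y < x t} = {x : FSp | x t ≤ y}ᶜ := by
    ext x; simp
  rw [hcompl, probReal_compl_eq_one_sub (measurableSet_le (measurable_eval_FSp t) measurable_const),
    margF, measureReal_def]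

lemma pdepth_eq_of_continuous_margF {t : unitInterval} (hF : Continuous (margF P t))
    (g : unitInterval → ℝ) : pdepth P g t = 1 - |1 - 2 * margF P t (g t)| := by
  rw [pdepth, ← measureReal_def, ← measureReal_def, measureReal_lt_eval,
    measureReal_eval_lt t hF]
  congr 2
  ring

lemma margF_quant {t : unitInterval} (hF : Continuous (margF P t)) {α : ℝ}
    (hα : α ∈ Ioo (0 : ℝ) 1) : margF P t (quant P α t) = α := by
  rw [margF_eq_cdf] at hF ⊢
  set μ := P.map fun x : FSp => x t
  obtain ⟨lo, hlo⟩ := ((ProbabilityTheory.tendsto_cdf_atBot μ).eventually (gt_mem_nhds hα.1)).exists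
  obtain ⟨hi, hhi⟩ := ((ProbabilityTheory.tendsto_cdf_atTop μ).eventually (lt_mem_nhds hα.2)).exists
  have := (ProbabilityTheory.cdf μ).mono.apply_sInf_preimage_Ici_eq hF hlo hhi.le
  rwa [quant, margF_eq_cdf]

lemma pdepth_le_of_le_quant {t : unitInterval} (hF : Continuous (margF P t)) {α : ℝ}
    (hα : α ∈ Ioo (0 : ℝ) 1) {g : unitInterval → ℝ} (hg : g t ≤ quant P α t) :
    pdepth P g t ≤ 2 * α := by
  have hFg : margF P t (g t) ≤ α := margF_quant hF hα ▸ (monotone_margF t hg)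
  rw [pdepth_eq_of_continuous_margF hF]
  linarith [le_abs_self (1 - 2 * margF P t (g t))]

lemma pdepth_le_of_quant_le {t : unitInterval} (hF : Continuous (margF P t)) {α : ℝ}
    (hα : α ∈ Ioo (0 : ℝ) 1) {g : unitInterval → ℝ} (hg : quant P (1 - α) t ≤ g t) :
    pdepth P g t ≤ 2 * α := by
  have hFg : 1 - α ≤ margF P t (g t) :=
    margF_quant hF ⟨sub_pos.2 hα.2, sub_lt_self 1 hα.1⟩ ▸ (monotone_margF t hg)
  rw [pdepth_eq_of_continuous_margF hF]
  linarith [neg_abs_le (1 - 2 * margF P t (g t))]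

end Depth

section ExtremalDepth

variable {P : Measure FSp}

lemma monotone_dcdf (g : unitInterval → ℝ) : Monotone (dcdf P g) := fun _ _ hrs =>
  ENNReal.toReal_mono (measure_ne_top _ _) (measure_mono fun _ ht => le_trans ht hrs)

lemma dcdf_eq_zero_of_lt_pdepth {g : unitInterval → ℝ} {c r : ℝ} (hg : ∀ t, c < pdepth P g t)
    (hr : r ≤ c) : dcdf P g r = 0 := by
  have hempty : {t : unitInterval | pdepth P g t ≤ r} = ∅ :=
    eq_empty_of_forall_notMem fun t ht => (hr.trans_lt (hg t)).not_ge ht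
  rw [dcdf, hempty, measure_empty, ENNReal.toReal_zero]

lemma dcdf_pos_of_pdepth_le_on_Ioo {g : unitInterval → ℝ} {r : ℝ} {a b : unitInterval}
    (hab : a < b) (hg : ∀ t ∈ Ioo a b, pdepth P g t ≤ r) : 0 < dcdf P g r := by
  have hvol : 0 < volume (Ioo a b) := by
    rw [unitInterval.volume_Ioo]
    exact ENNReal.ofReal_pos.2 (sub_pos.2 hab)
  exact ENNReal.toReal_pos (hvol.trans_le (measure_mono hg)).ne' (measure_ne_top _ _)

/- `Φ_x` vanishes on `(-∞, c]`, so `r ∈ R(g, x)` and `inf R(g, x) < c`; every `s` between that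
infimum and `c` lies above some `s' ∈ R(g, x)`, where `Φ_g s' > 0 = Φ_x s'`. -/
lemma prec_of_dcdf_pos {g x : unitInterval → ℝ} {c r : ℝ} (hr : r ∈ Icc (0 : ℝ) 1)
    (hrc : r < c) (hg : 0 < dcdf P g r) (hx : ∀ t, c < pdepth P x t) : prec P g x := by
  have hr_mem : r ∈ Rset P g x := ⟨hr, by rw [dcdf_eq_zero_of_lt_pdepth hx hrc.le]; exact hg.ne'⟩
  have hbdd : BddBelow (Rset P g x) := ⟨0, fun s hs => hs.1.1⟩
  have hinf_lt : sInf (Rset P g x) < c := (csInf_le hbdd hr_mem).trans_lt hrc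
  refine ⟨⟨r, hr_mem⟩, c - sInf (Rset P g x), sub_pos.2 hinf_lt, fun s ⟨⟨hs_gt, hs_lt⟩, _⟩ => ?_⟩
  obtain ⟨s', hs'_mem, hs's⟩ := exists_lt_of_csInf_lt ⟨r, hr_mem⟩ hs_gt
  have hs'_pos : 0 < dcdf P g s' := by
    have hx0 : dcdf P x s' = 0 := dcdf_eq_zero_of_lt_pdepth hx (by linarith)
    exact ENNReal.toReal_nonneg.lt_of_ne' (hx0 ▸ hs'_mem.2)
  rw [dcdf_eq_zero_of_lt_pdepth hx (by linarith)]
  exact hs'_pos.trans_le (monotone_dcdf g hs's.le)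

lemma ed_le_one_sub_of_prec [IsProbabilityMeasure P] {g : unitInterval → ℝ} {A : Set FSp}
    (hA : MeasurableSet A) (hprec : ∀ x ∈ A, prec P g x) : ed P g ≤ 1 - P.real A := by
  rw [← probReal_compl_eq_one_sub hA, ed, ← measureReal_def]
  exact measureReal_mono fun x hx hxA => hx (hprec x hxA)

end ExtremalDepth

theorem null_at_boundary_general (P : Measure FSp) [IsProbabilityMeasure P]
    (hFcont : ∀ t : unitInterval, Continuous (margF P t))
    (hAmeas : ∀ c : ℝ, 0 < c →
      MeasurableSet {x : FSp | ∀ t, c < pdepth P (⇑x) t})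
    (hAfull : Tendsto (fun c : ℝ => (P {x : FSp | ∀ t, c < pdepth P (⇑x) t}).toReal)
      (nhdsWithin 0 (Ioi 0)) (nhds 1))
    (a b : unitInterval) (hab : a < b)
    (αs : ℕ → ℝ) (hαrange : ∀ n, αs n ∈ Ioo (0:ℝ) (1/2))
    (hα0 : Tendsto αs atTop (nhds 0))
    (f : ℕ → unitInterval → ℝ)
    (hout : ∀ n, (∀ t ∈ Ioo a b, f n t ≤ quant P (αs n) t) ∨
                 (∀ t ∈ Ioo a b, quant P (1 - αs n) t ≤ f n t)) :
    Tendsto (fun n => ed P (f n)) atTop (nhds 0) := by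
  refine tendsto_order.2 ⟨fun e he => .of_forall fun n => he.trans_le ENNReal.toReal_nonneg,
    fun ε hε => ?_⟩
  obtain ⟨c, hcA, hc⟩ :=
    ((hAfull.eventually (lt_mem_nhds (sub_lt_self 1 hε))).and self_mem_nhdsWithin).exists
  filter_upwards [hα0.eventually (gt_mem_nhds (half_pos hc))] with n hn
  have hαn : αs n ∈ Ioo (0 : ℝ) 1 := ⟨(hαrange n).1, (hαrange n).2.trans one_half_lt_one⟩
  have hdepth : ∀ t ∈ Ioo a b, pdepth P (f n) t ≤ 2 * αs n := by
    rcases hout n with hlow | hhigh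
    · exact fun t ht => pdepth_le_of_le_quant (hFcont t) hαn (hlow t ht)
    · exact fun t ht => pdepth_le_of_quant_le (hFcont t) hαn (hhigh t ht)
  have hprec : ∀ x ∈ {x : FSp | ∀ t, c < pdepth P (⇑x) t}, prec P (f n) x := fun x hx =>
    prec_of_dcdf_pos ⟨by linarith [hαn.1], by linarith [(hαrange n).2]⟩ (by linarith)
      (dcdf_pos_of_pdepth_le_on_Ioo hab hdepth) hx
  linarith [ed_le_one_sub_of_prec (hAmeas c hc) hprec, measureReal_def P
    {x : FSp | ∀ t, c < pdepth P (⇑x) t}]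

/-- **Null-at-the-boundary property of extremal depth.** -/
theorem null_at_boundary (P : Measure FSp) [IsProbabilityMeasure P]
    (hFcont : ∀ t : unitInterval, Continuous (margF P t))
    (hAmeas : ∀ c : ℝ, 0 < c →
      MeasurableSet {x : FSp | ∀ t, c < pdepth P (⇑x) t})
    (hAfull : Tendsto (fun c : ℝ => (P {x : FSp | ∀ t, c < pdepth P (⇑x) t}).toReal)
      (nhdsWithin 0 (Ioi 0)) (nhds 1))
    (a b : unitInterval) (hab : a < b)
    (αs : ℕ → ℝ) (hαs : StrictAnti αs) (hαrange : ∀ n, αs n ∈ Ioo (0:ℝ) (1/2))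
    (hα0 : Tendsto αs atTop (nhds 0))
    (f : ℕ → unitInterval → ℝ) (hfmeas : ∀ n, Measurable (f n))
    (hout : ∀ n, (∀ t ∈ Ioo a b, f n t ≤ quant P (αs n) t) ∨
                 (∀ t ∈ Ioo a b, quant P (1 - αs n) t ≤ f n t)) :
    Tendsto (fun n => ed P (f n)) atTop (nhds 0) :=
  null_at_boundary_general P hFcont hAmeas hAfull a b hab αs hαrange hα0 f hout
end
end

section
/- Transitivity of the extremal-depth ordering: For Borel measurable f, g, h : I → ℝ, if f ≺ g and g ≺ h, then f ≺ h. -/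
open MeasureTheory Set Filter
open scoped NNReal ENNReal symmDiff

noncomputable section

lemma dcdf_one_s10 (P : Measure FSp) (g : unitInterval → ℝ) :
    dcdf P g 1 = (volume (univ : Set unitInterval)).toReal := by
  unfold dcdf
  congr 2
  ext t
  simp only [mem_setOf_eq, mem_univ, iff_true]
  exact sub_le_self _ (abs_nonneg _)

lemma one_notMem_Rset (P : Measure FSp) (g h : unitInterval → ℝ) :
    (1:ℝ) ∉ Rset P g h := by
  intro hmem
  exact hmem.2 ((dcdf_one_s10 P g).trans (dcdf_one_s10 P h).symm)

lemma Rset_bddBelow (P : Measure FSp) (g h : unitInterval → ℝ) :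
    BddBelow (Rset P g h) := ⟨0, fun r hr => hr.1.1⟩

lemma sInf_Rset_nonneg (P : Measure FSp) (g h : unitInterval → ℝ)
    (hne : (Rset P g h).Nonempty) : 0 ≤ sInf (Rset P g h) :=
  le_csInf hne fun r hr => hr.1.1

lemma sInf_Rset_lt_one (P : Measure FSp) (g h : unitInterval → ℝ)
    (hne : (Rset P g h).Nonempty) : sInf (Rset P g h) < 1 := by
  obtain ⟨r, hr⟩ := hne
  have h1 : r < 1 := lt_of_le_of_ne hr.1.2 (fun e => one_notMem_Rset P g h (e ▸ hr))
  exact lt_of_le_of_lt (csInf_le (Rset_bddBelow P g h) hr) h1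

lemma dcdf_eq_of_lt_sInf (P : Measure FSp) (g h : unitInterval → ℝ) {r : ℝ}
    (hr : r ∈ Icc (0:ℝ) 1) (hlt : r < sInf (Rset P g h)) :
    dcdf P g r = dcdf P h r := by
  by_contra hne
  exact absurd (csInf_le (Rset_bddBelow P g h) ⟨hr, hne⟩) (not_le_of_gt hlt)

lemma prec_of_interval (P : Measure FSp) (f h : unitInterval → ℝ) (s δ : ℝ)
    (hs0 : 0 ≤ s) (hs1 : s < 1) (hδ : 0 < δ)
    (heq : ∀ r ∈ Icc (0:ℝ) 1, r < s → dcdf P f r = dcdf P h r)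
    (hlt : ∀ r ∈ Ioo s (s + δ) ∩ Icc (0:ℝ) 1, dcdf P h r < dcdf P f r) :
    prec P f h := by
  have hmin : 0 < min δ (1 - s) := lt_min hδ (by linarith)
  have hm1 : min δ (1 - s) ≤ δ := min_le_left _ _
  have hm2 : min δ (1 - s) ≤ 1 - s := min_le_right _ _
  have hrb_mem : s + min δ (1 - s) / 2 ∈ Ioo s (s + δ) ∩ Icc (0:ℝ) 1 :=
    ⟨⟨by linarith, by linarith⟩, ⟨by linarith, by linarith⟩⟩
  set rb : ℝ := s + min δ (1 - s) / 2 with hrb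
  have hrb_R : rb ∈ Rset P f h := ⟨hrb_mem.2, (hlt rb hrb_mem).ne'⟩
  refine ⟨⟨rb, hrb_R⟩, ?_⟩
  have hbdd := Rset_bddBelow P f h
  have hinf_le : sInf (Rset P f h) ≤ rb := csInf_le hbdd hrb_R
  have hinf_ge : s ≤ sInf (Rset P f h) := by
    refine le_csInf ⟨rb, hrb_R⟩ fun r hr => ?_
    by_contra hc
    exact hr.2 (heq r hr.1 (lt_of_not_ge hc))
  have hrb_lt : rb < s + δ := hrb_mem.1.2
  refine ⟨s + δ - sInf (Rset P f h), by linarith, fun r hr => ?_⟩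
  apply hlt
  exact ⟨⟨lt_of_le_of_lt hinf_ge hr.1.1, by have := hr.1.2; linarith⟩, hr.2⟩

/-- **Transitivity of the extremal-depth ordering.** -/
theorem prec_trans (P : Measure FSp) [IsProbabilityMeasure P]
    (f g h : unitInterval → ℝ)
    (hf : Measurable f) (hg : Measurable g) (hh : Measurable h)
    (hfg : prec P f g) (hgh : prec P g h) : prec P f h := by
  obtain ⟨hne1, δ1, hδ1, H1⟩ := hfg
  obtain ⟨hne2, δ2, hδ2, H2⟩ := hgh
  set r1 := sInf (Rset P f g) with hr1
  set r2 := sInf (Rset P g h) with hr2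
  have hr1_0 : 0 ≤ r1 := sInf_Rset_nonneg P f g hne1
  have hr2_0 : 0 ≤ r2 := sInf_Rset_nonneg P g h hne2
  have hr1_1 : r1 < 1 := sInf_Rset_lt_one P f g hne1
  have hr2_1 : r2 < 1 := sInf_Rset_lt_one P g h hne2
  rcases lt_trichotomy r1 r2 with hlt | heq | hgt
  · -- r1 < r2
    refine prec_of_interval P f h r1 (min δ1 (r2 - r1)) hr1_0 hr1_1
      (lt_min hδ1 (by linarith)) (fun r hr hrlt => ?_) (fun r hr => ?_)
    · exact (dcdf_eq_of_lt_sInf P f g hr hrlt).trans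
        (dcdf_eq_of_lt_sInf P g h hr (by linarith))
    · obtain ⟨⟨ha, hb⟩, hc⟩ := hr
      have hrr2 : r < r2 := by
        have := min_le_right δ1 (r2 - r1); linarith
      have hrδ1 : r < r1 + δ1 := by
        have := min_le_left δ1 (r2 - r1); linarith
      have e1 : dcdf P g r = dcdf P h r := dcdf_eq_of_lt_sInf P g h hc hrr2
      have e2 := H1 r ⟨⟨ha, hrδ1⟩, hc⟩
      linarith
  · -- r1 = r2
    refine prec_of_interval P f h r1 (min δ1 δ2) hr1_0 hr1_1
      (lt_min hδ1 hδ2) (fun r hr hrlt => ?_) (fun r hr => ?_)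
    · exact (dcdf_eq_of_lt_sInf P f g hr hrlt).trans
        (dcdf_eq_of_lt_sInf P g h hr (by rw [← hr2, ← heq]; exact hrlt))
    · obtain ⟨⟨ha, hb⟩, hc⟩ := hr
      have e1 := H1 r ⟨⟨ha, by have := min_le_left δ1 δ2; linarith⟩, hc⟩
      have e2 := H2 r ⟨⟨by rw [← heq]; exact ha, by rw [← heq]; have := min_le_right δ1 δ2; linarith⟩, hc⟩
      linarith
  · -- r2 < r1
    refine prec_of_interval P f h r2 (min δ2 (r1 - r2)) hr2_0 hr2_1
      (lt_min hδ2 (by linarith)) (fun r hr hrlt => ?_) (fun r hr => ?_)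
    · exact (dcdf_eq_of_lt_sInf P f g hr (by linarith)).trans
        (dcdf_eq_of_lt_sInf P g h hr hrlt)
    · obtain ⟨⟨ha, hb⟩, hc⟩ := hr
      have hrr1 : r < r1 := by
        have := min_le_right δ2 (r1 - r2); linarith
      have hrδ2 : r < r2 + δ2 := by
        have := min_le_left δ2 (r1 - r2); linarith
      have e1 : dcdf P f r = dcdf P g r := dcdf_eq_of_lt_sInf P f g hc hrr1
      have e2 := H2 r ⟨⟨ha, hrδ2⟩, hc⟩
      linarith
end
end
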